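/- arXiv:2601.21858 — 3 statements merged into one kernel-verified Lean document; each statement's English description precedes it below -/
import Mathlib

section
/- For any real numbers S, S' with 0 < S ≤ S' ≤ 2S, the minimum over Δ ≥ 0 of max{1 + 2nΔ/S, (2nΔ + 2S)/(2nΔ + S')} (for any fixed n ≥ 1, with the substitution x = 2nΔ ≥ 0) equals 1 + (−a + √(a² − 4a + 8))/2 where a = S'/S, and this minimum is attained when the two terms inside the max are equal. -/
/-!
Normalize by `x = 2nΔ/S` and `a = S'/S ∈ [1, 2]`: the two ratios become `1 + x`, which is
increasing, and `(x + 2)/(x + a)`, which is non-increasing on `x ≥ 0` because `a ≤ 2`. The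
minimum of their maximum is therefore attained where they cross, i.e. at the non-negative root
`t` of `(1 + t)(t + a) = t + 2`, that is of `t² + a t + a - 2 = 0`.
-/

open Set

noncomputable def crossingPoint (a : ℝ) : ℝ := (-a + √(a ^ 2 - 4 * a + 8)) / 2

lemma crossingPoint_nonneg {a : ℝ} (ha : a ≤ 2) : 0 ≤ crossingPoint a := by
  have hdisc : a ^ 2 ≤ a ^ 2 - 4 * a + 8 := by linarith
  have : a ≤ √(a ^ 2 - 4 * a + 8) := Real.le_sqrt_of_sq_le hdisc
  unfold crossingPoint
  linarith

lemma one_add_crossingPoint_mul (a : ℝ) :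
    (1 + crossingPoint a) * (crossingPoint a + a) = crossingPoint a + 2 := by
  have hs : √(a ^ 2 - 4 * a + 8) ^ 2 = a ^ 2 - 4 * a + 8 :=
    Real.sq_sqrt (by nlinarith [sq_nonneg (a - 2)])
  unfold crossingPoint
  linear_combination hs / 4

lemma crossingPoint_add_two_div {a : ℝ} (ha0 : 0 < a) (ha2 : a ≤ 2) :
    (crossingPoint a + 2) / (crossingPoint a + a) = 1 + crossingPoint a := by
  have := crossingPoint_nonneg ha2
  rw [div_eq_iff (by positivity), one_add_crossingPoint_mul]

lemma add_two_div_add_antitoneOn {a : ℝ} (ha0 : 0 < a) (ha2 : a ≤ 2) :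
    AntitoneOn (fun x : ℝ => (x + 2) / (x + a)) (Ici 0) := by
  intro x hx y hy hxy
  simp only [mem_Ici] at hx hy
  rw [div_le_div_iff₀ (by linarith) (by linarith)]
  nlinarith

lemma isLeast_max_one_add_add_two_div {a : ℝ} (ha0 : 0 < a) (ha2 : a ≤ 2) :
    IsLeast ((fun x : ℝ => max (1 + x) ((x + 2) / (x + a))) '' Ici 0)
      (1 + crossingPoint a) := by
  have ht := crossingPoint_nonneg ha2
  refine ⟨⟨crossingPoint a, ht, by simp only [crossingPoint_add_two_div ha0 ha2, max_self]⟩, ?_⟩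
  rintro _ ⟨x, hx, rfl⟩
  rcases le_total (crossingPoint a) x with htx | hxt
  · exact le_max_of_le_left (by linarith)
  · refine le_max_of_le_right ?_
    calc 1 + crossingPoint a = (crossingPoint a + 2) / (crossingPoint a + a) :=
          (crossingPoint_add_two_div ha0 ha2).symm
      _ ≤ (x + 2) / (x + a) := add_two_div_add_antitoneOn ha0 ha2 hx ht hxt

/-- For `0 < S ≤ S' ≤ 2S` and fixed `n ≥ 1`, the minimum over `Δ ≥ 0` of
`max{1 + 2nΔ/S, (2nΔ + 2S)/(2nΔ + S')}` equals `1 + (−a + √(a² − 4a + 8))/2` with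
`a = S'/S`, attained where the two terms are equal. -/
theorem stmt_5 (S S' : ℝ) (hS : 0 < S) (h1 : S ≤ S') (h2 : S' ≤ 2 * S)
    (n : ℕ) (hn : 1 ≤ n) :
    IsLeast
      ((fun Δ : ℝ => max (1 + 2 * n * Δ / S) ((2 * n * Δ + 2 * S) / (2 * n * Δ + S'))) ''
        Ici 0)
      (1 + (-(S' / S) + Real.sqrt ((S' / S) ^ 2 - 4 * (S' / S) + 8)) / 2) ∧
    ∃ Δ : ℝ, 0 ≤ Δ ∧
      1 + 2 * n * Δ / S = (2 * n * Δ + 2 * S) / (2 * n * Δ + S') ∧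
      max (1 + 2 * n * Δ / S) ((2 * n * Δ + 2 * S) / (2 * n * Δ + S')) =
        1 + (-(S' / S) + Real.sqrt ((S' / S) ^ 2 - 4 * (S' / S) + 8)) / 2 := by
  have hn' : (1 : ℝ) ≤ n := by exact_mod_cast hn
  set c := 2 * (n : ℝ) / S with hc_def
  have hc : 0 < c := by positivity
  have ha0 : 0 < S' / S := by apply div_pos <;> linarith
  have ha2 : S' / S ≤ 2 := (div_le_iff₀ hS).2 h2
  have hscale : ∀ Δ : ℝ, 1 + 2 * n * Δ / S = 1 + c * Δ ∧
      (2 * n * Δ + 2 * S) / (2 * n * Δ + S') = (c * Δ + 2) / (c * Δ + S' / S) := by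
    intro Δ
    rw [hc_def]
    exact ⟨by rw [mul_div_right_comm], by field_simp⟩
  have hset : (fun Δ : ℝ => max (1 + 2 * n * Δ / S) ((2 * n * Δ + 2 * S) / (2 * n * Δ + S'))) =
      (fun x => max (1 + x) ((x + 2) / (x + S' / S))) ∘ (c * ·) := by
    funext Δ
    simp only [Function.comp, (hscale Δ).1, (hscale Δ).2]
  have hΔ : c * (crossingPoint (S' / S) / c) = crossingPoint (S' / S) :=
    mul_div_cancel₀ _ hc.ne'
  have hcross := (crossingPoint_add_two_div ha0 ha2).symm
  refine ⟨?_, crossingPoint (S' / S) / c, div_nonneg (crossingPoint_nonneg ha2) hc.le, ?_⟩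
  · rw [hset, image_comp, image_mul_left_Ici hc, mul_zero]
    exact isLeast_max_one_add_add_two_div ha0 ha2
  · rw [(hscale _).1, (hscale _).2, hΔ]
    exact ⟨hcross, by rw [← hcross, max_self]; rfl⟩
end

section
/- No online algorithm can have competitive ratio strictly less than (√5+1)/2 for the online matching problem: for every ε > 0 and every choice of delay Δ ≥ 0 by the algorithm, max{1 + x, (x + 2)/(x + a)} ≥ 1 + (−a + √(a²−4a+8))/2 for all x ≥ 0 and a ∈ [1,2] (with x = 2nΔ/S, a = S'/S), and as a → 1 the bound tends to (√5+1)/2. -/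
open Set Filter

/-- For all `x ≥ 0` and `a ∈ [1,2]`,
`max{1 + x, (x + 2)/(x + a)} ≥ 1 + (−a + √(a²−4a+8))/2`, and as `a → 1` this lower
bound tends to the golden ratio `(√5+1)/2`. -/
theorem stmt_6 :
    (∀ x : ℝ, 0 ≤ x → ∀ a ∈ Icc (1 : ℝ) 2,
      max (1 + x) ((x + 2) / (x + a)) ≥ 1 + (-a + Real.sqrt (a ^ 2 - 4 * a + 8)) / 2) ∧
    Tendsto (fun a : ℝ => 1 + (-a + Real.sqrt (a ^ 2 - 4 * a + 8)) / 2) (nhds 1)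
      (nhds ((Real.sqrt 5 + 1) / 2)) := by
  constructor
  · intro x hx a ha
    obtain ⟨ha1, ha2⟩ := ha
    set s := Real.sqrt (a ^ 2 - 4 * a + 8) with hs_def
    have hDnn : (0:ℝ) ≤ a ^ 2 - 4 * a + 8 := by nlinarith
    have hs2 : s ^ 2 = a ^ 2 - 4 * a + 8 := Real.sq_sqrt hDnn
    have hsnn : 0 ≤ s := Real.sqrt_nonneg _
    set b := (-a + s) / 2 with hb_def
    have hbnn : 0 ≤ b := by nlinarith
    have hbeq : b * (b + a) = 2 - a := by
      rw [hb_def]; nlinarith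
    rcases le_or_gt b x with h | h
    · exact le_max_of_le_left (by linarith)
    · refine le_max_of_le_right ?_
      rw [le_div_iff₀ (by linarith : (0:ℝ) < x + a)]
      nlinarith
  · have hc : Continuous (fun a : ℝ => 1 + (-a + Real.sqrt (a ^ 2 - 4 * a + 8)) / 2) := by
      fun_prop
    have := hc.tendsto 1
    convert this using 2
    have : (1:ℝ) ^ 2 - 4 * 1 + 8 = 5 := by norm_num
    rw [this]
    ring
end

section
/- Let f(k·1) = c/k for a constant c > 0 (so f is non-increasing along the diagonal). If n complete tuples arrive and are matched sequentially from a pool of all n tuples, the total matching cost is Σ_{k=1}^n c/k = c·H_n; if instead each tuple is matched immediately upon arrival (pool size 1 each time), the total matching cost is n·c. Therefore the ratio (n·c)/(c·H_n) = n/H_n is unbounded in n. -/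
/-! Since `H_n ≤ 1 + log n` and `log n = o(n)`, the harmonic numbers grow sublinearly, so the
ratio `n / H_n` of the immediate-matching cost to the full-pool cost tends to infinity. -/

open Filter

/-- The `n`-th harmonic number. -/
noncomputable def harmonic' (n : ℕ) : ℝ := ∑ k ∈ Finset.Icc 1 n, (1 : ℝ) / k

open Topology

lemma harmonic'_eq_harmonic (n : ℕ) : harmonic' n = harmonic n := by
  simp [harmonic', harmonic_eq_sum_Icc]

lemma sum_div_natCast_Icc_eq_mul_harmonic' (c : ℝ) (n : ℕ) :
    ∑ k ∈ Finset.Icc 1 n, c / (k : ℝ) = c * harmonic' n := by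
  simp_rw [harmonic', Finset.mul_sum, mul_one_div]

lemma tendsto_natCast_div_one_add_log :
    Tendsto (fun n : ℕ => (n : ℝ) / (1 + Real.log n)) atTop atTop := by
  have hlittleO : (fun x : ℝ => 1 + Real.log x) =o[atTop] id :=
    (Asymptotics.isLittleO_const_id_atTop 1).add Real.isLittleO_log_id_atTop
  have hpos : ∀ᶠ n : ℕ in atTop, (1 + Real.log n) / n ∈ Set.Ioi (0 : ℝ) := by
    filter_upwards [eventually_gt_atTop 0] with n hn
    exact Set.mem_Ioi.mpr (by positivity)
  have h0 : Tendsto (fun n : ℕ => (1 + Real.log n) / n) atTop (𝓝[>] 0) :=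
    tendsto_nhdsWithin_of_tendsto_nhds_of_eventually_within _
      hlittleO.natCast_atTop.tendsto_div_nhds_zero hpos
  exact h0.inv_tendsto_nhdsGT_zero.congr fun n => inv_div _ _

lemma tendsto_natCast_div_harmonic' :
    Tendsto (fun n : ℕ => (n : ℝ) / harmonic' n) atTop atTop := by
  refine tendsto_atTop_mono' atTop ?_ tendsto_natCast_div_one_add_log
  filter_upwards [eventually_ne_atTop 0] with n hn
  rw [harmonic'_eq_harmonic]
  exact div_le_div_of_nonneg_left n.cast_nonneg (by exact_mod_cast harmonic_pos hn)
    (harmonic_le_one_add_log n)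

/-- With diagonal matching cost `f(k·1) = c/k`, matching sequentially
from a full pool of `n` tuples costs `Σ_{k=1}^n c/k = c·H_n`, matching each tuple
immediately costs `n·c`, and the ratio `n/H_n` is unbounded in `n`. -/
theorem stmt_13 :
    (∀ c : ℝ, 0 < c → ∀ n : ℕ,
      (∑ k ∈ Finset.Icc 1 n, c / (k : ℝ)) = c * harmonic' n ∧
      (∑ _k ∈ Finset.Icc 1 n, c) = (n : ℝ) * c ∧
      ((n : ℝ) * c) / (c * harmonic' n) = (n : ℝ) / harmonic' n) ∧
    Tendsto (fun n : ℕ => (n : ℝ) / harmonic' n) atTop atTop := by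
  refine ⟨fun c hc n => ⟨sum_div_natCast_Icc_eq_mul_harmonic' c n, ?_, ?_⟩,
    tendsto_natCast_div_harmonic'⟩
  · simp [mul_comm]
  · rw [mul_comm (n : ℝ) c, mul_div_mul_left _ _ hc.ne']
end
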